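/- Let 0 < t₁ < π/2 and let A₀, B₀, A₁, B₁ be real constants. Suppose the function h : [0, π/2] → ℝ defined by h(t) = A₀ cos t + B₀ sin t + 1 for t ∈ [0, t₁] and h(t) = A₁ cos t + B₁ sin t − 1 for t ∈ [t₁, π/2] is continuously differentiable and satisfies h(0) = 0 and h'(π/2) = 0. Then A₀ = −1, A₁ = 0, and t₁ = π/3. -/

import Mathlib

open Real Set

/-! `h 0 = 0` forces `A₀ = -1` and `h' (π/2) = 0` forces `A₁ = 0`. Matching the values and
the slopes of the two pieces at `t₁` then gives, with `d = B₁ - B₀`, the system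
`d cos t₁ = sin t₁`, `d sin t₁ = 2 - cos t₁`; eliminating `d` yields
`sin² t₁ + cos² t₁ = 2 cos t₁`, i.e. `cos t₁ = 1/2`. -/

lemma HasDerivWithinAt.eq_of_eqOn_Icc {f g : ℝ → ℝ} {f' g' a b x : ℝ} {s : Set ℝ}
    (hab : a < b) (hx : x ∈ Icc a b) (hs : Icc a b ⊆ s) (hfg : EqOn f g (Icc a b))
    (hf : HasDerivWithinAt f f' s x) (hg : HasDerivAt g g' x) : f' = g' :=
  (uniqueDiffOn_Icc hab x hx).eq_deriv _
    ((hf.mono hs).congr_of_mem (fun _ hy => (hfg hy).symm) hx) hg.hasDerivWithinAt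

lemma hasDerivAt_mul_cos_add_mul_sin_add (A B c t : ℝ) :
    HasDerivAt (fun t => A * cos t + B * sin t + c) (B * cos t - A * sin t) t := by
  rw [show B * cos t - A * sin t = A * -sin t + B * cos t by ring]
  exact (((hasDerivAt_cos t).const_mul A).add ((hasDerivAt_sin t).const_mul B)).add_const c

lemma cos_eq_half_of_mul_cos_of_mul_sin {d t : ℝ} (hc : d * cos t = sin t)
    (hs : d * sin t = 2 - cos t) : cos t = 1 / 2 := by
  linear_combination (sin t * hc - cos t * hs + sin_sq_add_cos_sq t) / 2

lemma eq_pi_div_three_of_cos_eq_half {t : ℝ} (h0 : 0 ≤ t) (hπ : t ≤ π) (h : cos t = 1 / 2) :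
    t = π / 3 :=
  injOn_cos ⟨h0, hπ⟩ ⟨by positivity, by linarith [pi_pos]⟩ (h.trans cos_pi_div_three.symm)

theorem one_discontinuity_is_reuleaux (t₁ A₀ B₀ A₁ B₁ : ℝ)
    (ht₁ : t₁ ∈ Ioo (0:ℝ) (π/2)) (h h' : ℝ → ℝ)
    (hpiece₀ : ∀ t ∈ Icc (0:ℝ) t₁, h t = A₀ * Real.cos t + B₀ * Real.sin t + 1)
    (hpiece₁ : ∀ t ∈ Icc t₁ (π/2), h t = A₁ * Real.cos t + B₁ * Real.sin t - 1)
    (hderiv : ∀ t ∈ Icc (0:ℝ) (π/2), HasDerivWithinAt h (h' t) (Icc (0:ℝ) (π/2)) t)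
    (h0 : h 0 = 0) (hbc : h' (π/2) = 0) :
    A₀ = -1 ∧ A₁ = 0 ∧ t₁ = π/3 := by
  obtain ⟨ht0, htπ⟩ := ht₁
  have ht₁_left : t₁ ∈ Icc 0 t₁ := ⟨ht0.le, le_rfl⟩
  have ht₁_right : t₁ ∈ Icc t₁ (π/2) := ⟨le_rfl, htπ.le⟩
  have hA₀ : A₀ = -1 := by
    have := h0 ▸ hpiece₀ 0 ⟨le_rfl, ht0.le⟩
    simp only [cos_zero, sin_zero] at this
    linarith
  have hderiv₀ : h' t₁ = B₀ * cos t₁ - A₀ * sin t₁ :=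
    (hderiv t₁ ⟨ht0.le, htπ.le⟩).eq_of_eqOn_Icc ht0 ht₁_left (Icc_subset_Icc le_rfl htπ.le)
      (fun _ ht => hpiece₀ _ ht) (hasDerivAt_mul_cos_add_mul_sin_add A₀ B₀ 1 t₁)
  have hderiv₁ : ∀ t ∈ Icc t₁ (π/2), h' t = B₁ * cos t - A₁ * sin t := fun t ht =>
    (hderiv t ⟨ht0.le.trans ht.1, ht.2⟩).eq_of_eqOn_Icc htπ ht (Icc_subset_Icc ht0.le le_rfl)
      (fun _ ht => (hpiece₁ _ ht).trans (sub_eq_add_neg _ _))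
      (hasDerivAt_mul_cos_add_mul_sin_add A₁ B₁ (-1) t)
  have hA₁ : A₁ = 0 := by
    have := hbc ▸ hderiv₁ (π/2) ⟨htπ.le, le_rfl⟩
    simp only [cos_pi_div_two, sin_pi_div_two] at this
    linarith
  have hvalue := (hpiece₀ t₁ ht₁_left).symm.trans (hpiece₁ t₁ ht₁_right)
  have hslope := hderiv₀.symm.trans (hderiv₁ t₁ ht₁_right)
  subst hA₀ hA₁
  have hcos : cos t₁ = 1 / 2 :=
    cos_eq_half_of_mul_cos_of_mul_sin (d := B₁ - B₀) (by linarith) (by linarith)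
  exact ⟨rfl, rfl, eq_pi_div_three_of_cos_eq_half ht0.le (by linarith [pi_pos]) hcos⟩
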